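/- arXiv:2301.00659 — 4 statements merged into one kernel-verified Lean document; each statement's English description precedes it below -/
import Mathlib

section
/- Let Y be an absolutely continuous real random variable with probability density function g and cumulative distribution function G. Fix c < d with G(d) > G(c), and let S = (c,d). If G is a log-concave function on the support of Y, then the conditional extropy J(Y|S) = -(1/2) ∫_c^d (g(y)/(G(d)-G(c)))^2 dy is an increasing function of d for fixed c; that is, for any c < d1 ≤ d2, J(Y | c < Y < d1) ≤ J(Y | c < Y < d2). -/
/-!
Log-concavity of `G` makes `g / G` nonincreasing, so `g t * G s ≤ g s * G t` for `s < t`.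
Multiplying by `g s * g t` and integrating over `s ∈ (c, d₁]`, `t ∈ (d₁, d₂]` gives
`(∫_{d₁}^{d₂} g²) (G d₁² - G c²) ≤ (G d₂² - G d₁²) ∫_c^{d₁} g²`, because `G` is absolutely
continuous with `G' = g` a.e., so that `∫_a^b g G = (G b² - G a²) / 2`. Since `G c ≥ 0`, this is
exactly what makes `(∫_c^d g²) / (G d - G c)²` decrease from `d = d₁` to `d = d₂`.
-/

open MeasureTheory Real Set
open scoped Interval

theorem hasDerivAt_mul_le_of_concaveOn_log {F f' : ℝ → ℝ} (hmono : Monotone F)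
    (hlc : ConcaveOn ℝ {y | 0 < F y} (fun y => log (F y))) {s t : ℝ} (hst : s < t)
    (hs : HasDerivAt F (f' s) s) (ht : HasDerivAt F (f' t) t) (hFt : 0 ≤ F t) :
    f' t * F s ≤ f' s * F t := by
  rcases le_or_gt (F s) 0 with hFs | hFs
  · exact (mul_nonpos_of_nonneg_of_nonpos (ht.nonneg_of_monotone hmono) hFs).trans
      (mul_nonneg (hs.nonneg_of_monotone hmono) hFt)
  have hFt : 0 < F t := hFs.trans_le (hmono hst.le)
  have h := (hlc.le_slope_of_hasDerivAt hFs hFt hst (ht.log hFt.ne')).trans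
    (hlc.slope_le_of_hasDerivAt hFs hFt hst (hs.log hFs.ne'))
  rwa [div_le_div_iff₀ hFt hFs] at h

theorem integral_mul_integral_le_of_ae {α β : Type*} [MeasurableSpace α] [MeasurableSpace β]
    {μ : Measure α} {ν : Measure β} {f₁ f₂ : α → ℝ} {h₁ h₂ : β → ℝ}
    (hf₁ : Integrable f₁ μ) (hf₂ : Integrable f₂ μ) (hh₁ : Integrable h₁ ν) (hh₂ : Integrable h₂ ν)
    (h : ∀ᵐ t ∂ν, ∀ᵐ s ∂μ, h₁ t * f₁ s ≤ h₂ t * f₂ s) :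
    (∫ t, h₁ t ∂ν) * ∫ s, f₁ s ∂μ ≤ (∫ t, h₂ t ∂ν) * ∫ s, f₂ s ∂μ := by
  rw [← integral_mul_const, ← integral_mul_const]
  refine integral_mono_ae (hh₁.mul_const _) (hh₂.mul_const _) ?_
  filter_upwards [h] with t ht
  rw [← integral_const_mul, ← integral_const_mul]
  exact integral_mono_ae (hf₁.const_mul _) (hf₂.const_mul _) ht

theorem add_div_sq_sub_le_div_sq_sub {a b e I A : ℝ} (ha : 0 ≤ a) (hab : a < b) (hbe : b ≤ e)
    (hI : 0 ≤ I) (h : A * (b ^ 2 - a ^ 2) ≤ (e ^ 2 - b ^ 2) * I) :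
    (I + A) / (e - a) ^ 2 ≤ I / (b - a) ^ 2 := by
  rw [div_le_div_iff₀ (by nlinarith) (by nlinarith)]
  -- `(e - a)² - (b - a)² = (e - b)(e + b - 2a)`
  -- and `(e + b)(b - a) + 2a(e - a) = (e + b - 2a)(b + a)`
  refine le_of_mul_le_mul_right ?_ (by linarith : 0 < b + a)
  have hea : 0 ≤ e - a := sub_nonneg.2 (hab.le.trans hbe)
  nlinarith [mul_nonneg (mul_nonneg hI ha) (mul_nonneg (sub_nonneg.2 hbe) hea),
    mul_le_mul_of_nonneg_right h (sub_nonneg.2 hab.le)]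

theorem cdf_nonneg {g G : ℝ → ℝ} (hG : ∀ y, G y = ∫ t in Iic y, g t) (hg_nonneg : ∀ y, 0 ≤ g y)
    (y : ℝ) : 0 ≤ G y :=
  hG y ▸ setIntegral_nonneg measurableSet_Iic fun t _ => hg_nonneg t

section Cdf

variable {g G : ℝ → ℝ} (hg : Integrable g) (hG : ∀ y, G y = ∫ t in Iic y, g t)
include hg hG

theorem cdf_sub_cdf (u v : ℝ) : G v - G u = ∫ t in u..v, g t := by
  rw [hG, hG, intervalIntegral.integral_Iic_sub_Iic hg.integrableOn hg.integrableOn]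

theorem cdf_eq_add_primitive (a : ℝ) : G = fun x => G a + ∫ t in a..x, g t := by
  ext x
  rw [← cdf_sub_cdf hg hG a x, add_sub_cancel]

theorem ae_hasDerivAt_cdf : ∀ᵐ x, HasDerivAt G (g x) x := by
  filter_upwards [LocallyIntegrable.ae_hasDerivAt_integral hg.locallyIntegrable] with x hx
  rw [cdf_eq_add_primitive hg hG 0]
  exact (hx 0).const_add _

theorem absolutelyContinuousOnInterval_cdf (a b : ℝ) : AbsolutelyContinuousOnInterval G a b := by
  rw [cdf_eq_add_primitive hg hG a]
  exact contDiffOn_const.absolutelyContinuousOnInterval.add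
    (hg.intervalIntegrable.absolutelyContinuousOnInterval_intervalIntegral left_mem_uIcc)

theorem intervalIntegrable_mul_cdf (a b : ℝ) :
    IntervalIntegrable (fun x => g x * G x) volume a b :=
  hg.intervalIntegrable.mul_continuousOn (absolutelyContinuousOnInterval_cdf hg hG a b).continuousOn

theorem integral_mul_cdf (a b : ℝ) : ∫ x in a..b, g x * G x = (G b ^ 2 - G a ^ 2) / 2 := by
  have hG_ac := absolutelyContinuousOnInterval_cdf hg hG a b
  have hparts := hG_ac.integral_deriv_mul_eq_sub hG_ac
  have hderiv : ∀ᵐ x, x ∈ Ι a b → deriv G x * G x + G x * deriv G x = 2 * (g x * G x) := by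
    filter_upwards [ae_hasDerivAt_cdf hg hG] with x hx _
    rw [hx.deriv]
    ring
  rw [intervalIntegral.integral_congr_ae hderiv, intervalIntegral.integral_const_mul] at hparts
  linarith

theorem monotone_cdf (hg_nonneg : ∀ y, 0 ≤ g y) : Monotone G := fun u v huv => by
  rw [← sub_nonneg, cdf_sub_cdf hg hG]
  exact intervalIntegral.integral_nonneg huv fun t _ => hg_nonneg t

theorem integral_sq_mul_le_of_concaveOn_log (hg_nonneg : ∀ y, 0 ≤ g y)
    (hlc : ConcaveOn ℝ {y | 0 < G y} (fun y => log (G y))) {a b e : ℝ} (hab : a ≤ b)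
    (hbe : b ≤ e) (hab_int : IntervalIntegrable (fun y => g y ^ 2) volume a b)
    (hbe_int : IntervalIntegrable (fun y => g y ^ 2) volume b e) :
    (∫ t in b..e, g t ^ 2) * (G b ^ 2 - G a ^ 2) ≤ (G e ^ 2 - G b ^ 2) * ∫ s in a..b, g s ^ 2 := by
  have hmono := monotone_cdf hg hG hg_nonneg
  have hderiv := ae_hasDerivAt_cdf hg hG
  have hpointwise : ∀ᵐ t ∂volume.restrict (Ioc b e), ∀ᵐ s ∂volume.restrict (Ioc a b),
      g t ^ 2 * (g s * G s) ≤ g t * G t * g s ^ 2 := by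
    filter_upwards [ae_restrict_mem measurableSet_Ioc, ae_restrict_of_ae hderiv] with t ht hdt
    filter_upwards [ae_restrict_mem measurableSet_Ioc, ae_restrict_of_ae hderiv] with s hs hds
    have hlog := hasDerivAt_mul_le_of_concaveOn_log hmono hlc (hs.2.trans_lt ht.1) hds hdt
      (cdf_nonneg hG hg_nonneg t)
    calc g t ^ 2 * (g s * G s) = g t * g s * (g t * G s) := by ring
      _ ≤ g t * g s * (g s * G t) :=
        mul_le_mul_of_nonneg_left hlog (mul_nonneg (hg_nonneg t) (hg_nonneg s))
      _ = g t * G t * g s ^ 2 := by ring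
  have h := integral_mul_integral_le_of_ae
    (intervalIntegrable_mul_cdf hg hG a b).1 hab_int.1 hbe_int.1
    (intervalIntegrable_mul_cdf hg hG b e).1 hpointwise
  rw [← intervalIntegral.integral_of_le hab, ← intervalIntegral.integral_of_le hbe,
    ← intervalIntegral.integral_of_le hab, ← intervalIntegral.integral_of_le hbe,
    integral_mul_cdf hg hG, integral_mul_cdf hg hG] at h
  linarith

end Cdf

theorem conditional_extropy_increasing_of_logConcave_cdf_general
    (g G : ℝ → ℝ)
    (hg_nonneg : ∀ y, 0 ≤ g y)
    (hg_int : Integrable g)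
    (hG : ∀ y, G y = ∫ t in Set.Iic y, g t)
    (hlc : ConcaveOn ℝ {y : ℝ | 0 < G y} (fun y => Real.log (G y)))
    (c d₁ d₂ : ℝ) (hcd₁ : c < d₁) (hd : d₁ ≤ d₂)
    (hG₁ : G c < G d₁) :
    -(1 / 2) * ∫ y in c..d₁, (g y / (G d₁ - G c)) ^ 2
      ≤ -(1 / 2) * ∫ y in c..d₂, (g y / (G d₂ - G c)) ^ 2 := by
  simp only [div_pow, intervalIntegral.integral_div]
  have hI₁_nonneg : 0 ≤ ∫ y in c..d₁, g y ^ 2 :=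
    intervalIntegral.integral_nonneg hcd₁.le fun y _ => sq_nonneg _
  by_cases hint : IntervalIntegrable (fun y => g y ^ 2) volume c d₂
  · have hd₁_mem : d₁ ∈ [[c, d₂]] := mem_uIcc_of_le hcd₁.le hd
    have hint₁ := hint.mono_set (uIcc_subset_uIcc_left hd₁_mem)
    have hint₂ := hint.mono_set (uIcc_subset_uIcc_right hd₁_mem)
    have hkey := integral_sq_mul_le_of_concaveOn_log hg_int hG hg_nonneg hlc hcd₁.le hd hint₁ hint₂
    rw [← intervalIntegral.integral_add_adjacent_intervals hint₁ hint₂]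
    have hratio := add_div_sq_sub_le_div_sq_sub (cdf_nonneg hG hg_nonneg c) hG₁
      (monotone_cdf hg_int hG hg_nonneg hd) hI₁_nonneg hkey
    linarith
  -- otherwise the right-hand integral is `0` by convention
  · rw [intervalIntegral.integral_undef hint, zero_div, mul_zero]
    exact mul_nonpos_of_nonpos_of_nonneg (by norm_num) (div_nonneg hI₁_nonneg (sq_nonneg _))

/-- If the cumulative distribution function `G` of an absolutely continuous random
variable with density `g` is log-concave (on the set where `G > 0`), then the
conditional extropy `J(Y|(c,d)) = -(1/2) ∫_c^d (g y / (G d - G c))² dy` is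
increasing in `d` for fixed `c`. -/
theorem conditional_extropy_increasing_of_logConcave_cdf
    (g G : ℝ → ℝ)
    (hg_nonneg : ∀ y, 0 ≤ g y)
    (hg_int : Integrable g)
    (hG : ∀ y, G y = ∫ t in Set.Iic y, g t)
    (hlc : ConcaveOn ℝ {y : ℝ | 0 < G y} (fun y => Real.log (G y)))
    (c d₁ d₂ : ℝ) (hcd₁ : c < d₁) (hd : d₁ ≤ d₂)
    (hG₁ : G c < G d₁) (hG₂ : G c < G d₂) :
    -(1 / 2) * ∫ y in c..d₁, (g y / (G d₁ - G c)) ^ 2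
      ≤ -(1 / 2) * ∫ y in c..d₂, (g y / (G d₂ - G c)) ^ 2 :=
  conditional_extropy_increasing_of_logConcave_cdf_general g G hg_nonneg hg_int hG hlc c d₁ d₂ hcd₁
    hd hG₁
end

section
/- Let G be the cumulative distribution function of an absolutely continuous real random variable, and fix c with G(c) < 1. If G is log-concave on the set where G > 0, then the shifted function y ↦ G(y) - G(c) is log-concave on the set {y > c : G(y) > G(c)}. -/
open Real

/-!
Log-concavity of `G` says `G x ^ a * G y ^ b ≤ G (a x + b y)`. The weighted geometric mean is
superadditive (AM-GM applied to the normalised pairs), so lowering both arguments by the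
constant `G c ≥ 0` lowers their geometric mean by at least `G c`:
`(G x - G c) ^ a * (G y - G c) ^ b ≤ G x ^ a * G y ^ b - G c ≤ G (a x + b y) - G c`.
-/

theorem geom_mean_add_geom_mean_le_geom_mean_add {a b c d t s : ℝ}
    (ha : 0 ≤ a) (hb : 0 ≤ b) (hc : 0 ≤ c) (hd : 0 ≤ d) (hac : 0 < a + c) (hbd : 0 < b + d)
    (ht : 0 ≤ t) (hs : 0 ≤ s) (hts : t + s = 1) :
    a ^ t * b ^ s + c ^ t * d ^ s ≤ (a + c) ^ t * (b + d) ^ s := by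
  have hP : 0 < (a + c) ^ t * (b + d) ^ s := by positivity
  have amgm_ab := geom_mean_le_arith_mean2_weighted ht hs
    (div_nonneg ha hac.le) (div_nonneg hb hbd.le) hts
  have amgm_cd := geom_mean_le_arith_mean2_weighted ht hs
    (div_nonneg hc hac.le) (div_nonneg hd hbd.le) hts
  rw [div_rpow ha hac.le, div_rpow hb hbd.le] at amgm_ab
  rw [div_rpow hc hac.le, div_rpow hd hbd.le] at amgm_cd
  have hsum : t * (a / (a + c)) + s * (b / (b + d)) + (t * (c / (a + c)) + s * (d / (b + d)))
      = 1 := by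
    field_simp
    linear_combination (a + c) * (b + d) * hts
  rw [← div_le_one hP]
  calc (a ^ t * b ^ s + c ^ t * d ^ s) / ((a + c) ^ t * (b + d) ^ s)
      = a ^ t / (a + c) ^ t * (b ^ s / (b + d) ^ s)
        + c ^ t / (a + c) ^ t * (d ^ s / (b + d) ^ s) := by
        rw [add_div, div_mul_div_comm, div_mul_div_comm]
    _ ≤ 1 := by linarith

theorem sub_rpow_mul_sub_rpow_le {A B C t s : ℝ} (hC : 0 ≤ C) (hCA : C < A) (hCB : C < B)
    (ht : 0 ≤ t) (hs : 0 ≤ s) (hts : t + s = 1) :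
    (A - C) ^ t * (B - C) ^ s ≤ A ^ t * B ^ s - C := by
  have hCC : C ^ t * C ^ s = C := by
    rw [← rpow_add' hC (by rw [hts]; exact one_ne_zero), hts, rpow_one]
  have := geom_mean_add_geom_mean_le_geom_mean_add (sub_pos.2 hCA).le (sub_pos.2 hCB).le hC hC
    (by linarith) (by linarith) ht hs hts
  rw [sub_add_cancel, sub_add_cancel, hCC] at this
  linarith

theorem concaveOn_log_iff_rpow_mul_rpow_le {E : Type*} [AddCommGroup E] [Module ℝ E]
    {S : Set E} {f : E → ℝ} (hS : Convex ℝ S) (hf : ∀ x ∈ S, 0 < f x) :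
    ConcaveOn ℝ S (fun x => log (f x)) ↔
      ∀ ⦃x⦄, x ∈ S → ∀ ⦃y⦄, y ∈ S → ∀ ⦃a b : ℝ⦄, 0 ≤ a → 0 ≤ b → a + b = 1 →
        f x ^ a * f y ^ b ≤ f (a • x + b • y) := by
  have hlog_le_iff : ∀ ⦃x⦄, x ∈ S → ∀ ⦃y⦄, y ∈ S → ∀ ⦃a b : ℝ⦄, 0 ≤ a → 0 ≤ b → a + b = 1 →
      (a • log (f x) + b • log (f y) ≤ log (f (a • x + b • y)) ↔
        f x ^ a * f y ^ b ≤ f (a • x + b • y)) := by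
    intro x hx y hy a b ha hb hab
    have hfx := hf x hx
    have hfy := hf y hy
    rw [← log_le_log_iff (by positivity) (hf _ (hS hx hy ha hb hab)),
      log_mul (by positivity) (by positivity), log_rpow hfx, log_rpow hfy, smul_eq_mul,
      smul_eq_mul]
  exact ⟨fun h x hx y hy a b ha hb hab => (hlog_le_iff hx hy ha hb hab).1 (h.2 hx hy ha hb hab),
    fun h => ⟨hS, fun x hx y hy a b ha hb hab =>
      (hlog_le_iff hx hy ha hb hab).2 (h hx hy ha hb hab)⟩⟩

theorem shifted_cdf_logConcave_general
    (G : ℝ → ℝ)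
    (hmono : Monotone G)
    (hle : ∀ y, 0 ≤ G y ∧ G y ≤ 1)
    (c : ℝ)
    (hlc : ConcaveOn ℝ {y : ℝ | 0 < G y} (fun y => Real.log (G y))) :
    ConcaveOn ℝ {y : ℝ | c < y ∧ G c < G y} (fun y => Real.log (G y - G c)) := by
  have hGc : 0 ≤ G c := (hle c).1
  have hconvex : Convex ℝ {y : ℝ | c < y ∧ G c < G y} :=
    (hmono.monotoneOn _).convex_gt (convex_Ioi c) (G c)
  have hG := (concaveOn_log_iff_rpow_mul_rpow_le hlc.1 fun _ h => h).1 hlc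
  rw [concaveOn_log_iff_rpow_mul_rpow_le hconvex fun y hy => sub_pos.2 hy.2]
  intro x hx y hy a b ha hb hab
  calc (G x - G c) ^ a * (G y - G c) ^ b ≤ G x ^ a * G y ^ b - G c :=
        sub_rpow_mul_sub_rpow_le hGc hx.2 hy.2 ha hb hab
    _ ≤ G (a • x + b • y) - G c :=
        sub_le_sub_right (hG (hGc.trans_lt hx.2) (hGc.trans_lt hy.2) ha hb hab) _

/-- If a cumulative distribution function `G` (increasing, continuous, with values
in `[0,1]`) is log-concave on the set where `G > 0`, and `G c < 1`, then the
shifted function `y ↦ G y - G c` is log-concave on `{y | c < y ∧ G c < G y}`. -/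
theorem shifted_cdf_logConcave
    (G : ℝ → ℝ)
    (hmono : Monotone G)
    (hcont : Continuous G)
    (hle : ∀ y, 0 ≤ G y ∧ G y ≤ 1)
    (c : ℝ) (hc : G c < 1)
    (hlc : ConcaveOn ℝ {y : ℝ | 0 < G y} (fun y => Real.log (G y))) :
    ConcaveOn ℝ {y : ℝ | c < y ∧ G c < G y} (fun y => Real.log (G y - G c)) :=
  shifted_cdf_logConcave_general G hmono hle c hlc
end

section
/- Let Y1 and Y2 be independent, identically distributed absolutely continuous real random variables with common log-concave probability density function g and cumulative distribution function G. Fix c < d with G(d) > G(c), and define h(v;c,d) = (∫_{c+v}^{d} g(y-v) g(y) dy) / (G(d) - G(c))^2 for v ∈ [0, d-c]. Then h(v;c,d) is a decreasing function of v on [0, d-c]. -/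
open MeasureTheory Real

lemma logconcave_pair_mul {g : ℝ → ℝ}
    (hlc : ConcaveOn ℝ {y : ℝ | 0 < g y} (fun y => Real.log (g y)))
    {x y a' b' : ℝ} (hx : 0 < g x) (hy : 0 < g y)
    (h1 : x ≤ a') (h2 : a' ≤ b') (h3 : b' ≤ y) (hsum : a' + b' = x + y) :
    g x * g y ≤ g a' * g b' := by
  rcases eq_or_lt_of_le (h1.trans (h2.trans h3)) with heq | hxy
  · have ha : a' = x := le_antisymm (by linarith) h1
    have hb : b' = y := by linarith
    rw [ha, hb]
  · set t : ℝ := (a' - x) / (y - x) with ht_def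
    have hyx : 0 < y - x := by linarith
    have ht0 : 0 ≤ t := div_nonneg (by linarith) hyx.le
    have ht1 : t ≤ 1 := by rw [div_le_one hyx]; linarith
    have ht1' : (0:ℝ) ≤ 1 - t := by linarith
    have hxs : x ∈ {y : ℝ | 0 < g y} := hx
    have hys : y ∈ {y : ℝ | 0 < g y} := hy
    have hconv := hlc.1
    have hcc := hlc.2
    have htmul : t * (y - x) = a' - x := by
      rw [ht_def]; exact div_mul_cancel₀ _ (ne_of_gt hyx)
    have ea : (1 - t) * x + t * y = a' := by linarith [htmul]
    have eb : t * x + (1 - t) * y = b' := by nlinarith [htmul]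
    have ea' : (1 - t) • x + t • y = a' := by rw [smul_eq_mul, smul_eq_mul]; exact ea
    have eb' : t • x + (1 - t) • y = b' := by rw [smul_eq_mul, smul_eq_mul]; exact eb
    have ha's : 0 < g a' := by
      have := hconv hxs hys (a := 1 - t) (b := t) ht1' ht0 (by ring)
      rwa [ea'] at this
    have hb's : 0 < g b' := by
      have := hconv hxs hys (a := t) (b := 1 - t) ht0 ht1' (by ring)
      rwa [eb'] at this
    have i1 := hcc hxs hys (a := 1 - t) (b := t) ht1' ht0 (by ring)
    rw [ea'] at i1
    have i2 := hcc hxs hys (a := t) (b := 1 - t) ht0 ht1' (by ring)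
    rw [eb'] at i2
    rw [smul_eq_mul, smul_eq_mul] at i1 i2
    calc g x * g y = exp (log (g x) + log (g y)) := by
          rw [exp_add, exp_log hx, exp_log hy]
      _ ≤ exp (log (g a') + log (g b')) := exp_le_exp.2 (by linarith)
      _ = g a' * g b' := by rw [exp_add, exp_log ha's, exp_log hb's]

/-- A nonnegative log-concave function is bounded on any compact interval. -/
lemma logconcave_bounded {g : ℝ → ℝ} (hg_nonneg : ∀ y, 0 ≤ g y)
    (hlc : ConcaveOn ℝ {y : ℝ | 0 < g y} (fun y => Real.log (g y)))
    {p z : ℝ} (hp : 0 < g p) (hz : 0 < g z) (hpz : p < z) (a b : ℝ) :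
    ∃ M : ℝ, 0 < M ∧ ∀ x ∈ Set.Icc a b, g x ≤ M := by
  set f : ℝ → ℝ := fun y => Real.log (g y) with hf_def
  have hconv := hlc.1
  have hcc := hlc.2
  have hps : p ∈ {y : ℝ | 0 < g y} := hp
  have hzs : z ∈ {y : ℝ | 0 < g y} := hz
  have hzp : 0 < z - p := by linarith
  set K : ℝ := (f z - f p) / (z - p) with hK_def
  -- midpoint positivity
  have hm_mem : (p + z) / 2 ∈ {y : ℝ | 0 < g y} := by
    have := hconv hps hzs (a := (1:ℝ)/2) (b := (1:ℝ)/2) (by norm_num) (by norm_num) (by norm_num)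
    rw [smul_eq_mul, smul_eq_mul] at this
    have e : (1:ℝ)/2 * p + (1:ℝ)/2 * z = (p + z) / 2 := by ring
    rwa [e] at this
  set B : ℝ := max (max (f p + (a - p) * K) (f p + (b - p) * K))
      (2 * f ((p + z) / 2) - min (f p) (f z)) with hB_def
  refine ⟨Real.exp B, exp_pos B, ?_⟩
  intro x hx
  rcases (hg_nonneg x).lt_or_eq with hgx | hgx
  swap
  · rw [← hgx]; exact (exp_pos B).le
  have hxs : x ∈ {y : ℝ | 0 < g y} := hgx
  suffices hfx : f x ≤ B by
    calc g x = exp (f x) := (exp_log hgx).symm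
      _ ≤ exp B := exp_le_exp.2 hfx
  -- linear bound helper
  have hlin : f p + (x - p) * K ≤ B := by
    rcases le_or_gt 0 K with hK | hK
    · refine le_trans ?_ ((le_max_left _ _).trans_eq rfl)
      have hm := mul_le_mul_of_nonneg_right hx.2 hK
      have : f p + (x - p) * K ≤ f p + (b - p) * K := by linarith
      exact this.trans (le_max_right _ _)
    · refine le_trans ?_ (le_max_left _ _)
      have hm := mul_le_mul_of_nonpos_right hx.1 hK.le
      have : f p + (x - p) * K ≤ f p + (a - p) * K := by linarith
      exact this.trans (le_max_left _ _)
  rcases lt_or_ge x p with hxp | hpx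
  · -- x < p : p = t•x + (1-t)•z with t = (z-p)/(z-x)
    have hzx : 0 < z - x := by linarith
    set t : ℝ := (z - p) / (z - x) with ht_def
    have ht0 : 0 < t := div_pos hzp hzx
    have ht1 : t ≤ 1 := by rw [div_le_one hzx]; linarith
    have htmul : t * (z - x) = z - p := by
      rw [ht_def]; exact div_mul_cancel₀ _ (ne_of_gt hzx)
    have ep : t * x + (1 - t) * z = p := by linarith [htmul]
    have ep' : t • x + (1 - t) • z = p := by rw [smul_eq_mul, smul_eq_mul]; exact ep
    have i := hcc hxs hzs (a := t) (b := 1 - t) ht0.le (by linarith) (by ring)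
    rw [ep'] at i
    rw [smul_eq_mul, smul_eq_mul] at i
    -- i : t * f x + (1 - t) * f z ≤ f p
    have i2 : (z - p) * f x + (p - x) * f z ≤ (z - x) * f p := by
      have := mul_le_mul_of_nonneg_left i hzx.le
      have e1 : (z - x) * (t * f x) = (z - p) * f x := by
        rw [← mul_assoc, mul_comm (z-x) t, htmul]
      have e2 : (z - x) * ((1 - t) * f z) = (p - x) * f z := by
        rw [← mul_assoc]
        have : (z - x) * (1 - t) = p - x := by linarith [htmul]
        rw [this]
      linarith [this, e1, e2]
    have : f x ≤ f p + (x - p) * K := by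
      rw [hK_def]
      rw [show f p + (x - p) * ((f z - f p) / (z - p))
          = ((z - p) * f p + (x - p) * (f z - f p)) / (z - p) by field_simp]
      rw [le_div_iff₀ hzp]
      linarith [i2]
    linarith
  rcases le_or_gt x z with hxz | hzx
  · -- p ≤ x ≤ z : reflection trick
    have hB2 : 2 * f ((p + z) / 2) - min (f p) (f z) ≤ B := le_max_right _ _
    set x' : ℝ := p + z - x with hx'_def
    have hu0 : 0 ≤ (x - p) / (z - p) := div_nonneg (by linarith) hzp.le
    have hu1 : (x - p) / (z - p) ≤ 1 := by rw [div_le_one hzp]; linarith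
    have humul : (x - p) / (z - p) * (z - p) = x - p := div_mul_cancel₀ _ (ne_of_gt hzp)
    have ex' : ((x - p)/(z - p)) * p + (1 - (x - p)/(z - p)) * z = x' := by
      rw [hx'_def]; linarith [humul]
    have ex'' : ((x - p)/(z - p)) • p + (1 - (x - p)/(z - p)) • z = x' := by
      rw [smul_eq_mul, smul_eq_mul]; exact ex'
    have hx's : x' ∈ {y : ℝ | 0 < g y} := by
      have := hconv hps hzs (a := (x - p)/(z - p)) (b := 1 - (x - p)/(z - p)) hu0 (by linarith) (by ring)
      rwa [ex''] at this
    have ifx' := hcc hps hzs (a := (x - p)/(z - p)) (b := 1 - (x - p)/(z - p)) hu0 (by linarith) (by ring)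
    rw [ex''] at ifx'
    rw [smul_eq_mul, smul_eq_mul] at ifx'
    -- ifx' : u * f p + (1 - u) * f z ≤ f x'
    have hmin : min (f p) (f z) ≤ f x' := by
      have h1 : min (f p) (f z) ≤ f p := min_le_left _ _
      have h2 : min (f p) (f z) ≤ f z := min_le_right _ _
      have e1 : (x - p)/(z - p) * min (f p) (f z) ≤ (x - p)/(z - p) * f p :=
        mul_le_mul_of_nonneg_left h1 hu0
      have e2 : (1 - (x - p)/(z - p)) * min (f p) (f z) ≤ (1 - (x - p)/(z - p)) * f z :=
        mul_le_mul_of_nonneg_left h2 (by linarith)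
      linarith [ifx', e1, e2]
    have imid := hcc hxs hx's (a := (1:ℝ)/2) (b := (1:ℝ)/2) (by norm_num) (by norm_num) (by norm_num)
    simp only [smul_eq_mul] at imid
    have emid : (1:ℝ)/2 * x + (1:ℝ)/2 * x' = (p + z)/2 := by rw [hx'_def]; ring
    rw [emid] at imid
    -- imid : 1/2 f x + 1/2 f x' ≤ f ((p+z)/2)
    linarith [imid, hmin, hB2]
  · -- z < x
    have hxp : 0 < x - p := by linarith
    set t : ℝ := (z - p) / (x - p) with ht_def
    have ht0 : 0 < t := div_pos hzp hxp
    have ht1 : t ≤ 1 := by rw [div_le_one hxp]; linarith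
    have htmul : t * (x - p) = z - p := by
      rw [ht_def]; exact div_mul_cancel₀ _ (ne_of_gt hxp)
    have ez : t * x + (1 - t) * p = z := by linarith [htmul]
    have ez' : t • x + (1 - t) • p = z := by rw [smul_eq_mul, smul_eq_mul]; exact ez
    have i := hcc hxs hps (a := t) (b := 1 - t) ht0.le (by linarith) (by ring)
    rw [ez'] at i
    rw [smul_eq_mul, smul_eq_mul] at i
    -- i : t * f x + (1 - t) * f p ≤ f z
    have i2 : (z - p) * f x + (x - z) * f p ≤ (x - p) * f z := by
      have := mul_le_mul_of_nonneg_left i hxp.le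
      have e1 : (x - p) * (t * f x) = (z - p) * f x := by
        rw [← mul_assoc, mul_comm (x-p) t, htmul]
      have e2 : (x - p) * ((1 - t) * f p) = (x - z) * f p := by
        rw [← mul_assoc]
        have : (x - p) * (1 - t) = x - z := by linarith [htmul]
        rw [this]
      linarith [this, e1, e2]
    have : f x ≤ f p + (x - p) * K := by
      rw [hK_def]
      rw [show f p + (x - p) * ((f z - f p) / (z - p))
          = ((z - p) * f p + (x - p) * (f z - f p)) / (z - p) by field_simp]
      rw [le_div_iff₀ hzp]
      linarith [i2]
    linarith

lemma integrableOn_mul_shift {g : ℝ → ℝ} (hg_nonneg : ∀ y, 0 ≤ g y)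
    (hg_int : Integrable g) {M c d : ℝ} (hM : ∀ x ∈ Set.Icc c d, g x ≤ M)
    (s t u w : ℝ) (h : ∀ y ∈ Set.Ioc u w, y - s ∈ Set.Icc c d) :
    IntegrableOn (fun y => g (y - s) * g (y - t)) (Set.Ioc u w) := by
  have hms : AEStronglyMeasurable (fun y : ℝ => g (y - s)) volume :=
    hg_int.1.comp_measurePreserving (measurePreserving_sub_right volume s)
  have hmt : AEStronglyMeasurable (fun y : ℝ => g (y - t)) volume :=
    hg_int.1.comp_measurePreserving (measurePreserving_sub_right volume t)
  have hdom : Integrable (fun y : ℝ => M * g (y - t)) (volume.restrict (Set.Ioc u w)) :=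
    (((hg_int.comp_sub_right t).const_mul M)).restrict
  refine Integrable.mono' hdom ((hms.mul hmt).restrict) ?_
  rw [ae_restrict_iff' measurableSet_Ioc]
  refine Filter.Eventually.of_forall (fun y hy => ?_)
  have h1 : 0 ≤ g (y - s) := hg_nonneg _
  have h2 : 0 ≤ g (y - t) := hg_nonneg _
  rw [Real.norm_eq_abs, abs_of_nonneg (mul_nonneg h1 h2)]
  exact mul_le_mul_of_nonneg_right (hM _ (h y hy)) h2

/-- If the common density `g` of two i.i.d. absolutely continuous random variables
is log-concave, then the conditional density
`h(v; c, d) = (∫_{c+v}^d g(y - v) g(y) dy) / (G d - G c)²` of `V = |Y₁ - Y₂|`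
given `{c < Y₁, Y₂ < d}` is a decreasing function of `v` on `[0, d - c]`. -/
theorem conditional_density_of_difference_antitone
    (g G : ℝ → ℝ)
    (hg_nonneg : ∀ y, 0 ≤ g y)
    (hg_int : Integrable g)
    (hG : ∀ y, G y = ∫ t in Set.Iic y, g t)
    (hlc : ConcaveOn ℝ {y : ℝ | 0 < g y} (fun y => Real.log (g y)))
    (c d : ℝ) (hcd : c < d) (hGcd : G c < G d) :
    AntitoneOn (fun v => (∫ y in (c + v)..d, g (y - v) * g y) / (G d - G c) ^ 2)
      (Set.Icc 0 (d - c)) := by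
  -- there exist two points where g is positive
  have hex : ∃ p, 0 < g p ∧ ∃ z, 0 < g z ∧ p < z := by
    by_contra hcon
    push_neg at hcon
    have hsub : Set.Subsingleton {y : ℝ | 0 < g y} := by
      intro u hu v hv
      have h1 := hcon u hu v hv
      by_contra hne
      rcases lt_or_gt_of_ne hne with h | h
      · exact absurd h (not_lt.2 h1)
      · exact absurd h (not_lt.2 (hcon v hv u hu))
    have hnull : volume {y : ℝ | 0 < g y} = 0 := hsub.measure_zero _
    have hg0 : g =ᵐ[volume] 0 := by
      refine measure_mono_null ?_ hnull
      intro x hx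
      have : g x ≠ 0 := hx
      exact lt_of_le_of_ne (hg_nonneg x) (Ne.symm this)
    have hzero : ∀ y, G y = 0 := by
      intro y
      rw [hG y]
      exact integral_eq_zero_of_ae (ae_restrict_of_ae hg0)
    rw [hzero c, hzero d] at hGcd
    exact lt_irrefl 0 hGcd
  obtain ⟨p, hp, z, hz, hpz⟩ := hex
  obtain ⟨M, hMpos, hM⟩ := logconcave_bounded hg_nonneg hlc hp hz hpz c d
  have hD : 0 < (G d - G c) ^ 2 := pow_pos (sub_pos.2 hGcd) 2
  intro v1 hv1 v2 hv2 h12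
  simp only
  have key : (∫ y in (c + v2)..d, g (y - v2) * g y)
      ≤ ∫ y in (c + v1)..d, g (y - v1) * g y := by
    rcases eq_or_lt_of_le h12 with rfl | h12'
    · exact le_rfl
    obtain ⟨hv10, hv1d⟩ := hv1
    obtain ⟨hv20, hv2d⟩ := hv2
    set δ : ℝ := (v2 - v1) / 2 with hδ_def
    have hδ0 : 0 ≤ δ := by simp [hδ_def]; linarith
    have h2d : c + v2 ≤ d := by linarith
    have h1d : c + v1 ≤ d := by linarith
    -- integrability facts
    have int2 : IntegrableOn (fun y => g (y - v2) * g y) (Set.Ioc (c + v2) d) := by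
      have := integrableOn_mul_shift hg_nonneg hg_int hM v2 0 (c + v2) d
        (fun y hy => ⟨by linarith [hy.1], by linarith [hy.2]⟩)
      simpa using this
    have intShift : IntegrableOn (fun y => g ((y - δ) - v1) * g (y - δ)) (Set.Ioc (c + v2) d) := by
      have := integrableOn_mul_shift hg_nonneg hg_int hM (δ + v1) δ (c + v2) d
        (fun y hy => ⟨by linarith [hy.1], by linarith [hy.2]⟩)
      refine this.congr_fun (fun y _ => ?_) measurableSet_Ioc
      rw [sub_sub]
    have int1 : IntegrableOn (fun y => g (y - v1) * g y) (Set.Ioc (c + v1) d) := by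
      have := integrableOn_mul_shift hg_nonneg hg_int hM v1 0 (c + v1) d
        (fun y hy => ⟨by linarith [hy.1], by linarith [hy.2]⟩)
      simpa using this
    -- pointwise inequality
    have hpt : ∀ y : ℝ, g (y - v2) * g y ≤ g ((y - δ) - v1) * g (y - δ) := by
      intro y
      rcases (hg_nonneg (y - v2)).lt_or_eq with hga | hga
      swap
      · rw [← hga, zero_mul]
        exact mul_nonneg (hg_nonneg _) (hg_nonneg _)
      rcases (hg_nonneg y).lt_or_eq with hgb | hgb
      swap
      · rw [← hgb, mul_zero]
        exact mul_nonneg (hg_nonneg _) (hg_nonneg _)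
      exact logconcave_pair_mul hlc hga hgb (by simp [hδ_def]; linarith)
        (by simp [hδ_def]; linarith) (by linarith [hδ0])
        (by simp [hδ_def]; ring)
    rw [intervalIntegral.integral_of_le h2d, intervalIntegral.integral_of_le h1d]
    calc (∫ y in Set.Ioc (c + v2) d, g (y - v2) * g y)
        ≤ ∫ y in Set.Ioc (c + v2) d, g ((y - δ) - v1) * g (y - δ) :=
          setIntegral_mono_on int2 intShift measurableSet_Ioc (fun y _ => hpt y)
      _ = ∫ y in Set.Ioc (c + v2 - δ) (d - δ), g (y - v1) * g y := by
          rw [← intervalIntegral.integral_of_le h2d,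
            ← intervalIntegral.integral_of_le (by linarith : c + v2 - δ ≤ d - δ)]
          exact intervalIntegral.integral_comp_sub_right (fun y => g (y - v1) * g y) δ
      _ ≤ ∫ y in Set.Ioc (c + v1) d, g (y - v1) * g y := by
          refine setIntegral_mono_set int1 ?_ ?_
          · exact Filter.Eventually.of_forall
              (fun y => mul_nonneg (hg_nonneg _) (hg_nonneg _))
          · exact (Set.Ioc_subset_Ioc (by simp only [hδ_def]; linarith)
              (by linarith)).eventuallyLE
  gcongr
end

section
/- Let Y1 and Y2 be independent, identically distributed absolutely continuous real random variables with common log-concave probability density function g and cumulative distribution function G, and let V = |Y1 - Y2|. Let w : [0,∞) → [0,∞) be a decreasing nonnegative weight function. For c < d with G(d) > G(c), let h(v;c,d) = (∫_{c+v}^{d} g(y-v) g(y) dy)/(G(d)-G(c))^2 for v ∈ [0, d-c], and define J^w(V|S) = -(1/2) ∫_0^{d-c} w(v) h(v;c,d)^2 dv. Then for fixed d and any c1 ≤ c2 < d, J^w(V | c2 < Y1, Y2 < d) ≤ J^w(V | c1 < Y1, Y2 < d); that is, J^w(V|S) is decreasing in c. -/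
/-!
Write `u_c = g · 1_(c,d)` and `a_c(v) = ∫ u_c(y) u_c(y + v) dy`, so that `h(v; c, d)` is
`a_c(v) / (∫ u_c)²` for `0 < v ≤ d - c`. By Fubini, `∫_{v > 0} a_c = (∫ u_c)² / 2`: every
`h(·; c, d)` has the same mass `1/2`. Log-concavity of `g` is used in the form
`g a * g b ≤ g a' * g b'` for `a ≤ a' ≤ b`, `a + b = a' + b'`. It makes each `a_c` decreasing on
`[0, ∞)`, and makes the kernels `(c, y) ↦ u_c(y)` and `(y, v) ↦ (g · 1_(-∞,d))(y + v)` sign-regular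
of order two, so the basic composition formula shows that `h(·; c₂, d) / h(·; c₁, d)` is decreasing
when `c₁ ≤ c₂`. The same formula, applied to this ratio and to the decreasing weight
`w · (h₁ + h₂)`, gives `∫ w h₁ (h₁ + h₂) ≤ ∫ w h₂ (h₁ + h₂)`, i.e. `∫ w h₁² ≤ ∫ w h₂²`.
-/

open MeasureTheory Real Set

namespace WeightedExtropy

def LogConcave (g : ℝ → ℝ) : Prop :=
  ConcaveOn ℝ {y | 0 < g y} fun y => log (g y)

theorem _root_.ConcaveOn.bddAbove_image_inter_Icc {s : Set ℝ} {f : ℝ → ℝ} (hf : ConcaveOn ℝ s f)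
    (hs : s.Nontrivial) (a b : ℝ) : BddAbove (f '' (s ∩ Icc a b)) := by
  obtain ⟨p, hp, q, hq, hpq⟩ : ∃ p ∈ s, ∃ q ∈ s, p < q := by
    obtain ⟨x, hx, y, hy, hxy⟩ := hs
    rcases hxy.lt_or_gt with h | h
    exacts [⟨x, hx, y, hy, h⟩, ⟨y, hy, x, hx, h⟩]
  obtain ⟨m, hpm, hmq⟩ := exists_between hpq
  have hm : m ∈ s := hf.1.ordConnected.out hp hq ⟨hpm.le, hmq.le⟩
  set σ₁ := (f m - f p) / (m - p)
  set σ₂ := (f q - f m) / (q - m)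
  refine ⟨f m + (|a - m| + |b - m|) * (|σ₁| + |σ₂|), ?_⟩
  rintro _ ⟨x, ⟨hx, hax, hxb⟩, rfl⟩
  have hR : 0 ≤ (|a - m| + |b - m|) * (|σ₁| + |σ₂|) := by positivity
  rcases lt_trichotomy x m with hxm | hxm | hmx
  · have hslope : σ₂ * (m - x) ≤ f m - f x :=
      (le_div_iff₀ (sub_pos.2 hxm)).1 (hf.slope_anti_adjacent hx hq hxm hmq)
    have : -σ₂ * (m - x) ≤ |σ₂| * |a - m| :=
      mul_le_mul (neg_le_abs σ₂) (by rw [abs_sub_comm, abs_of_nonneg] <;> linarith)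
        (by linarith) (abs_nonneg _)
    nlinarith [abs_nonneg σ₁, abs_nonneg σ₂, abs_nonneg (a - m), abs_nonneg (b - m)]
  · rw [hxm]; linarith
  · have hslope : f x - f m ≤ σ₁ * (x - m) :=
      (div_le_iff₀ (sub_pos.2 hmx)).1 (hf.slope_anti_adjacent hp hx hpm hmx)
    have : σ₁ * (x - m) ≤ |σ₁| * |b - m| :=
      mul_le_mul (le_abs_self σ₁) (by rw [abs_of_nonneg] <;> linarith)
        (by linarith) (abs_nonneg _)
    nlinarith [abs_nonneg σ₁, abs_nonneg σ₂, abs_nonneg (a - m), abs_nonneg (b - m)]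

theorem nontrivial_pos_of_setIntegral_pos {g : ℝ → ℝ} {s : Set ℝ} (h : 0 < ∫ y in s, g y) :
    {y | 0 < g y}.Nontrivial := by
  by_contra hg
  have hle : ∀ᵐ y, g y ≤ 0 := by
    rw [ae_iff]
    simpa using (not_nontrivial_iff.1 hg).measure_zero volume
  exact h.not_ge (integral_nonpos_of_ae (ae_restrict_of_ae hle))

namespace LogConcave

variable {g : ℝ → ℝ}

theorem indicator (hg : LogConcave g) {s : Set ℝ} (hs : Convex ℝ s) :
    LogConcave (s.indicator g) := by
  have hpos : {y | 0 < s.indicator g y} = {y | 0 < g y} ∩ s := by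
    ext y
    by_cases hy : y ∈ s <;> simp [hy]
  unfold LogConcave
  rw [hpos]
  refine (hg.subset inter_subset_left (hg.1.inter hs)).congr fun y hy => ?_
  simp [indicator_of_mem hy.2]

theorem mul_le_mul_of_add_eq (hg : LogConcave g) (hg0 : ∀ y, 0 ≤ g y) {a b a' b' : ℝ}
    (ha' : a' ∈ Icc a b) (hsum : a' + b' = a + b) : g a * g b ≤ g a' * g b' := by
  rcases (hg0 a).eq_or_lt with ha | ha
  · rw [← ha, zero_mul]; exact mul_nonneg (hg0 _) (hg0 _)
  rcases (hg0 b).eq_or_lt with hb | hb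
  · rw [← hb, mul_zero]; exact mul_nonneg (hg0 _) (hg0 _)
  rw [← segment_eq_Icc (ha'.1.trans ha'.2)] at ha'
  obtain ⟨s, t, hs, ht, hst, rfl⟩ := ha'
  obtain rfl : b' = t • a + s • b := by
    simp only [smul_eq_mul] at hsum ⊢; linear_combination hsum - (a + b) * hst
  have hts : t + s = 1 := by linarith
  have ha'S : 0 < g (s • a + t • b) := hg.1 ha hb hs ht hst
  have hb'S : 0 < g (t • a + s • b) := hg.1 ha hb ht hs hts
  have h₁ := hg.2 ha hb hs ht hst
  have h₂ := hg.2 ha hb ht hs hts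
  simp only [smul_eq_mul] at h₁ h₂ ha'S hb'S ⊢
  rw [← log_le_log_iff (by positivity) (by positivity), log_mul ha.ne' hb.ne',
    log_mul ha'S.ne' hb'S.ne']
  linear_combination h₁ + h₂ - (log (g a) + log (g b)) * hst

theorem bddAbove_image_Icc (hg : LogConcave g) (hg0 : ∀ y, 0 ≤ g y)
    (hs : {y | 0 < g y}.Nontrivial) (a b : ℝ) : BddAbove (g '' Icc a b) := by
  obtain ⟨K, hK⟩ := ConcaveOn.bddAbove_image_inter_Icc hg hs a b
  refine ⟨exp K, ?_⟩
  rintro _ ⟨y, hy, rfl⟩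
  rcases (hg0 y).eq_or_lt with h | h
  · rw [← h]; positivity
  · rw [← exp_log h]
    exact exp_le_exp.2 (hK ⟨y, ⟨h, hy⟩, rfl⟩)

end LogConcave

noncomputable def autocorr (u : ℝ → ℝ) (v : ℝ) : ℝ := ∫ y, u y * u (y + v)

section autocorr

variable {u : ℝ → ℝ}

theorem autocorr_neg (u : ℝ → ℝ) (v : ℝ) : autocorr u (-v) = autocorr u v := by
  rw [autocorr, ← integral_add_right_eq_self _ v]
  simp only [add_neg_cancel_right, mul_comm]
  rfl

theorem integrable_autocorr_kernel (hu : Integrable u) :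
    Integrable (fun p : ℝ × ℝ => u p.2 * u (p.2 + p.1)) (volume.prod volume) :=
  (measurePreserving_prod_add_swap volume volume).integrable_comp_of_integrable (hu.mul_prod hu)

theorem integrable_autocorr (hu : Integrable u) : Integrable (autocorr u) :=
  (integrable_autocorr_kernel hu).integral_prod_left

theorem integral_autocorr (hu : Integrable u) : ∫ v, autocorr u v = (∫ y, u y) ^ 2 := by
  have hψ := measurePreserving_prod_add_swap (volume : Measure ℝ) volume
  rw [sq, ← integral_prod_mul]
  conv_rhs => rw [← hψ.map_eq]
  rw [integral_map hψ.measurable.aemeasurable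
    (by rw [hψ.map_eq]; exact (hu.mul_prod hu).aestronglyMeasurable)]
  exact (integral_prod _ (integrable_autocorr_kernel hu)).symm

theorem integral_Ioi_autocorr (hu : Integrable u) :
    ∫ v in Ioi 0, autocorr u v = (∫ y, u y) ^ 2 / 2 := by
  have heven : ∀ v, autocorr u |v| = autocorr u v := fun v => by
    rcases abs_choice v with h | h <;> rw [h]
    exact autocorr_neg u v
  have := integral_comp_abs (f := autocorr u)
  simp only [heven] at this
  rw [← integral_autocorr hu, this]
  ring

theorem autocorr_nonneg (hu0 : ∀ y, 0 ≤ u y) (v : ℝ) : 0 ≤ autocorr u v :=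
  integral_nonneg fun y => mul_nonneg (hu0 y) (hu0 _)

variable {M : ℝ}

theorem integrable_mul_comp_add_right (hu : Integrable u) (hu0 : ∀ y, 0 ≤ u y)
    (huM : ∀ y, u y ≤ M) (v : ℝ) : Integrable fun y => u y * u (y + v) :=
  (hu.comp_add_right v).bdd_mul hu.aestronglyMeasurable
    (ae_of_all _ fun y => by rw [norm_of_nonneg (hu0 y)]; exact huM y)

theorem autocorr_le (hu : Integrable u) (hu0 : ∀ y, 0 ≤ u y) (huM : ∀ y, u y ≤ M) (v : ℝ) :
    autocorr u v ≤ M * ∫ y, u y := by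
  rw [← integral_const_mul]
  refine integral_mono (integrable_mul_comp_add_right hu hu0 huM v) (hu.const_mul M) fun y => ?_
  rw [mul_comm M]
  exact mul_le_mul_of_nonneg_left (huM _) (hu0 y)

theorem autocorr_antitoneOn (hu : Integrable u) (hu0 : ∀ y, 0 ≤ u y) (huM : ∀ y, u y ≤ M)
    (hlc : LogConcave u) : AntitoneOn (autocorr u) (Ici 0) := by
  intro v₁ (hv₁ : 0 ≤ v₁) v₂ _ hv
  set m := (v₂ - v₁) / 2
  calc autocorr u v₂ ≤ ∫ y, u (y + m) * u (y + m + v₁) :=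
        integral_mono (integrable_mul_comp_add_right hu hu0 huM v₂)
          ((integrable_mul_comp_add_right hu hu0 huM v₁).comp_add_right m) fun y =>
          hlc.mul_le_mul_of_add_eq hu0 ⟨by simp only [m]; linarith, by simp only [m]; linarith⟩
            (by ring)
    _ = autocorr u v₁ := integral_add_right_eq_self (fun y => u y * u (y + v₁)) m

end autocorr

theorem integral_mul_integral_le_of_signRegular {α : Type*} [MeasurableSpace α] [LinearOrder α]
    {μ : Measure α} [SigmaFinite μ] {s : Set α} (hs : MeasurableSet s) {A₁ A₂ B₁ B₂ : α → ℝ}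
    (h₁₁ : IntegrableOn (fun x => A₁ x * B₁ x) s μ) (h₁₂ : IntegrableOn (fun x => A₁ x * B₂ x) s μ)
    (h₂₁ : IntegrableOn (fun x => A₂ x * B₁ x) s μ) (h₂₂ : IntegrableOn (fun x => A₂ x * B₂ x) s μ)
    (hA : ∀ y ∈ s, ∀ z ∈ s, z ≤ y → A₁ y * A₂ z ≤ A₁ z * A₂ y)
    (hB : ∀ y ∈ s, ∀ z ∈ s, z ≤ y → B₂ y * B₁ z ≤ B₂ z * B₁ y) :
    (∫ x in s, A₂ x * B₂ x ∂μ) * (∫ x in s, A₁ x * B₁ x ∂μ) ≤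
      (∫ x in s, A₂ x * B₁ x ∂μ) * ∫ x in s, A₁ x * B₂ x ∂μ := by
  have hD : 0 ≤ ∫ p, (A₂ p.1 * A₁ p.2 - A₁ p.1 * A₂ p.2) * (B₁ p.1 * B₂ p.2 - B₂ p.1 * B₁ p.2)
      ∂(μ.restrict s).prod (μ.restrict s) := by
    rw [Measure.prod_restrict]
    refine setIntegral_nonneg (hs.prod hs) fun p ⟨hx, hy⟩ => ?_
    rcases le_total p.2 p.1 with h | h
    · exact mul_nonneg (by linarith [hA _ hx _ hy h]) (by linarith [hB _ hx _ hy h])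
    · exact mul_nonneg_of_nonpos_of_nonpos (by linarith [hA _ hy _ hx h])
        (by linarith [hB _ hy _ hx h])
  have hexpand : ∀ p : α × α,
      (A₂ p.1 * A₁ p.2 - A₁ p.1 * A₂ p.2) * (B₁ p.1 * B₂ p.2 - B₂ p.1 * B₁ p.2) =
        (A₂ p.1 * B₁ p.1) * (A₁ p.2 * B₂ p.2) + (A₁ p.1 * B₂ p.1) * (A₂ p.2 * B₁ p.2) -
          ((A₂ p.1 * B₂ p.1) * (A₁ p.2 * B₁ p.2) + (A₁ p.1 * B₁ p.1) * (A₂ p.2 * B₂ p.2)) :=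
    fun p => by ring
  simp only [hexpand] at hD
  rw [integral_sub ?pos ?neg, integral_add (h₂₁.mul_prod h₁₂) (h₁₂.mul_prod h₂₁),
    integral_add (h₂₂.mul_prod h₁₁) (h₁₁.mul_prod h₂₂),
    integral_prod_mul (fun x => A₂ x * B₁ x) (fun x => A₁ x * B₂ x),
    integral_prod_mul (fun x => A₁ x * B₂ x) (fun x => A₂ x * B₁ x),
    integral_prod_mul (fun x => A₂ x * B₂ x) (fun x => A₁ x * B₁ x),
    integral_prod_mul (fun x => A₁ x * B₁ x) (fun x => A₂ x * B₂ x)] at hD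
  · linarith
  case pos => exact (h₂₁.mul_prod h₁₂).add (h₁₂.mul_prod h₂₁)
  case neg => exact (h₂₂.mul_prod h₁₁).add (h₁₁.mul_prod h₂₂)

theorem setIntegral_mul_sq_le_of_ratio_antitoneOn {s : Set ℝ} (hs : MeasurableSet s)
    {w p q : ℝ → ℝ} {C : ℝ} (hw0 : ∀ v ∈ s, 0 ≤ w v) (hp0 : ∀ v ∈ s, 0 ≤ p v)
    (hq0 : ∀ v ∈ s, 0 ≤ q v) (hwC : ∀ v ∈ s, w v ≤ C) (hpC : ∀ v ∈ s, p v ≤ C)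
    (hqC : ∀ v ∈ s, q v ≤ C) (hw : AntitoneOn w s) (hp : AntitoneOn p s) (hq : AntitoneOn q s)
    (hpi : IntegrableOn p s) (hqi : IntegrableOn q s)
    (hratio : ∀ y ∈ s, ∀ z ∈ s, z ≤ y → q y * p z ≤ q z * p y)
    (hmass : ∫ v in s, p v = ∫ v in s, q v) (hpos : 0 < ∫ v in s, p v) :
    ∫ v in s, w v * p v ^ 2 ≤ ∫ v in s, w v * q v ^ 2 := by
  have hwm : AEStronglyMeasurable w (volume.restrict s) :=
    (aemeasurable_restrict_of_antitoneOn hs hw).aestronglyMeasurable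
  have hbdd {f h : ℝ → ℝ} {K : ℝ} (hf : AEStronglyMeasurable f (volume.restrict s))
      (hf0 : ∀ v ∈ s, 0 ≤ f v) (hfK : ∀ v ∈ s, f v ≤ K) (hh : IntegrableOn h s volume) :
      IntegrableOn (fun v => h v * f v) s volume :=
    Integrable.mul_bdd (μ := volume.restrict s) hh hf <| (ae_restrict_iff' hs).2 <|
      ae_of_all _ fun v hv => by rw [Real.norm_of_nonneg (hf0 v hv)]; exact hfK v hv
  set φ := fun v => w v * (p v + q v)
  have hφm : AEStronglyMeasurable φ (volume.restrict s) :=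
    hwm.mul (hpi.aestronglyMeasurable.add hqi.aestronglyMeasurable)
  have hφ0 : ∀ v ∈ s, 0 ≤ φ v := fun v hv =>
    mul_nonneg (hw0 v hv) (by linarith [hp0 v hv, hq0 v hv])
  have hφC : ∀ v ∈ s, φ v ≤ C * (C + C) := fun v hv =>
    mul_le_mul (hwC v hv) (add_le_add (hpC v hv) (hqC v hv)) (by linarith [hp0 v hv, hq0 v hv])
      ((hw0 v hv).trans (hwC v hv))
  have hφp := hbdd hφm hφ0 hφC hpi
  have hφq := hbdd hφm hφ0 hφC hqi
  have hsq {f : ℝ → ℝ} (hf0 : ∀ v ∈ s, 0 ≤ f v) (hfC : ∀ v ∈ s, f v ≤ C)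
      (hfi : IntegrableOn f s volume) : IntegrableOn (fun v => w v * f v ^ 2) s volume :=
    (hbdd (hwm.mul hfi.aestronglyMeasurable) (fun v hv => mul_nonneg (hw0 v hv) (hf0 v hv))
      (fun v hv => mul_le_mul (hwC v hv) (hfC v hv) (hf0 v hv) ((hw0 v hv).trans (hwC v hv)))
      hfi).congr_fun (fun v _ => by simp only [Pi.mul_apply]; ring) hs
  have key := integral_mul_integral_le_of_signRegular (μ := volume) hs (A₁ := q) (A₂ := p)
    (B₁ := fun _ => 1) (B₂ := φ) (by simpa using hqi) hφq (by simpa using hpi) hφp hratio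
    fun y hy z hz hzy => by
      simp only [mul_one]
      exact mul_le_mul (hw hz hy hzy) (add_le_add (hp hz hy hzy) (hq hz hy hzy))
        (by linarith [hp0 y hy, hq0 y hy]) (hw0 z hz)
  simp only [mul_one, ← hmass] at key
  have hφ_le : ∫ v in s, p v * φ v ≤ ∫ v in s, q v * φ v :=
    le_of_mul_le_mul_right (key.trans_eq (mul_comm _ _)) hpos
  have hdiff : (∫ v in s, w v * q v ^ 2) - ∫ v in s, w v * p v ^ 2 =
      (∫ v in s, q v * φ v) - ∫ v in s, p v * φ v := by
    rw [← integral_sub (hsq hq0 hqC hqi) (hsq hp0 hpC hpi), ← integral_sub hφq hφp]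
    congr 1; ext v; simp only [φ]; ring
  linarith

theorem indicator_Ioi_mul_le_of_le {f : ℝ → ℝ} (hf : ∀ y, 0 ≤ f y) {c₁ c₂ y z : ℝ}
    (hc : c₁ ≤ c₂) (hzy : z ≤ y) :
    (Ioi c₁).indicator f y * (Ioi c₂).indicator f z ≤
      (Ioi c₁).indicator f z * (Ioi c₂).indicator f y := by
  by_cases hz : c₂ < z
  · rw [indicator_of_mem (show y ∈ Ioi c₁ from hc.trans_lt (hz.trans_le hzy)),
      indicator_of_mem (show z ∈ Ioi c₂ from hz),
      indicator_of_mem (show z ∈ Ioi c₁ from hc.trans_lt hz),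
      indicator_of_mem (show y ∈ Ioi c₂ from hz.trans_le hzy), mul_comm]
  · rw [indicator_of_notMem (show z ∉ Ioi c₂ from hz), mul_zero]
    exact mul_nonneg (indicator_nonneg (fun y _ => hf y) _) (indicator_nonneg (fun y _ => hf y) _)

theorem indicator_Ioi_mul_indicator_Ioi_add (f : ℝ → ℝ) {c v : ℝ} (hv : 0 ≤ v) (y : ℝ) :
    (Ioi c).indicator f y * (Ioi c).indicator f (y + v) = (Ioi c).indicator f y * f (y + v) := by
  by_cases hy : c < y
  · rw [indicator_of_mem (show y + v ∈ Ioi c by simp only [mem_Ioi]; linarith)]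
  · rw [indicator_of_notMem (show y ∉ Ioi c from hy), zero_mul, zero_mul]

section condDensity

variable {g : ℝ → ℝ} {c d M : ℝ}

theorem autocorr_indicator_Ioo_mul_le (hg : Integrable g) (hg0 : ∀ y, 0 ≤ g y) (hlc : LogConcave g)
    {c₁ c₂ : ℝ} (hM : ∀ y, (Ioo c₁ d).indicator g y ≤ M) (hc : c₁ ≤ c₂) {v₁ v₂ : ℝ}
    (hv₁ : 0 ≤ v₁) (hv : v₁ ≤ v₂) :
    autocorr ((Ioo c₂ d).indicator g) v₂ * autocorr ((Ioo c₁ d).indicator g) v₁ ≤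
      autocorr ((Ioo c₂ d).indicator g) v₁ * autocorr ((Ioo c₁ d).indicator g) v₂ := by
  set gd := (Iio d).indicator g
  have hgd0 : ∀ y, 0 ≤ gd y := indicator_nonneg fun y _ => hg0 y
  have hu : ∀ c, (Ioo c d).indicator g = (Ioi c).indicator gd := fun c => by
    rw [indicator_indicator, Ioi_inter_Iio]
  have hprod : ∀ c v, 0 ≤ v →
      (fun y => (Ioo c d).indicator g y * (Ioo c d).indicator g (y + v)) =
        fun y => (Ioi c).indicator gd y * gd (y + v) := fun c v hv => by
    ext y; rw [hu, indicator_Ioi_mul_indicator_Ioi_add gd hv]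
  have hint : ∀ c, c₁ ≤ c → ∀ v, 0 ≤ v →
      IntegrableOn (fun y => (Ioi c).indicator gd y * gd (y + v)) univ := fun c hc v hv => by
    rw [integrableOn_univ, ← hprod c v hv]
    exact integrable_mul_comp_add_right (hg.indicator measurableSet_Ioo)
      (indicator_nonneg fun y _ => hg0 y)
      (fun y => (indicator_le_indicator_of_subset (Ioo_subset_Ioo_left hc) hg0 y).trans (hM y)) v
  have key := integral_mul_integral_le_of_signRegular (μ := volume) MeasurableSet.univ
    (A₁ := (Ioi c₁).indicator gd) (A₂ := (Ioi c₂).indicator gd)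
    (B₁ := fun y => gd (y + v₁)) (B₂ := fun y => gd (y + v₂))
    (hint c₁ le_rfl v₁ hv₁) (hint c₁ le_rfl v₂ (hv₁.trans hv))
    (hint c₂ hc v₁ hv₁) (hint c₂ hc v₂ (hv₁.trans hv))
    (fun y _ z _ hzy => indicator_Ioi_mul_le_of_le hgd0 hc hzy)
    fun y _ z _ hzy => (mul_comm _ _).trans_le <|
      (hlc.indicator (convex_Iio d)).mul_le_mul_of_add_eq hgd0
        ⟨by linarith, by linarith⟩ (by ring)
  simp only [Measure.restrict_univ] at key
  simpa only [autocorr, hprod c₁ v₁ hv₁, hprod c₁ v₂ (hv₁.trans hv), hprod c₂ v₁ hv₁,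
    hprod c₂ v₂ (hv₁.trans hv)] using key

theorem intervalIntegral_eq_autocorr {v : ℝ} (hv : 0 ≤ v) (hvd : c + v ≤ d) :
    ∫ y in (c + v)..d, g (y - v) * g y = autocorr ((Ioo c d).indicator g) v := by
  rw [intervalIntegral.integral_of_le hvd, integral_Ioc_eq_integral_Ioo,
    ← integral_indicator measurableSet_Ioo, autocorr,
    ← integral_sub_right_eq_self
      (fun y => (Ioo c d).indicator g y * (Ioo c d).indicator g (y + v)) v]
  congr 1; ext y
  simp only [sub_add_cancel]
  by_cases hy : y ∈ Ioo (c + v) d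
  · rw [indicator_of_mem hy,
      indicator_of_mem (show y - v ∈ Ioo c d from ⟨by linarith [hy.1], by linarith [hy.2]⟩),
      indicator_of_mem (show y ∈ Ioo c d from ⟨by linarith [hy.1], hy.2⟩)]
  · rw [indicator_of_notMem hy]
    simp only [mem_Ioo, not_and_or, not_lt] at hy
    rcases hy with hy | hy
    · rw [indicator_of_notMem (fun h : y - v ∈ Ioo c d => by linarith [h.1]), zero_mul]
    · rw [indicator_of_notMem (fun h : y ∈ Ioo c d => by linarith [h.2]), mul_zero]

theorem autocorr_indicator_Ioo_of_le {v : ℝ} (hv : d - c ≤ v) :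
    autocorr ((Ioo c d).indicator g) v = 0 := by
  refine integral_eq_zero_of_ae (ae_of_all _ fun y => ?_)
  dsimp only
  by_cases hy : y ∈ Ioo c d
  · rw [Pi.zero_apply, indicator_of_notMem (fun h : y + v ∈ Ioo c d => by linarith [hy.1, h.2]),
      mul_zero]
  · rw [Pi.zero_apply, indicator_of_notMem hy, zero_mul]

-- The paper's `h(v; c, d)`, with `G d - G c` written as `∫ y in Ioo c d, g y`.
noncomputable def condDensity (g : ℝ → ℝ) (c d v : ℝ) : ℝ :=
  autocorr ((Ioo c d).indicator g) v / (∫ y in Ioo c d, g y) ^ 2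

theorem condDensity_nonneg (hg0 : ∀ y, 0 ≤ g y) (v : ℝ) : 0 ≤ condDensity g c d v :=
  div_nonneg (autocorr_nonneg (indicator_nonneg fun y _ => hg0 y) v) (sq_nonneg _)

theorem condDensity_le (hg : Integrable g) (hg0 : ∀ y, 0 ≤ g y)
    (hM : ∀ y, (Ioo c d).indicator g y ≤ M) (hI : ∫ y in Ioo c d, g y ≠ 0) (v : ℝ) :
    condDensity g c d v ≤ M / ∫ y in Ioo c d, g y := by
  have h := autocorr_le (hg.indicator measurableSet_Ioo) (indicator_nonneg fun y _ => hg0 y) hM v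
  rw [integral_indicator measurableSet_Ioo] at h
  rw [condDensity, sq, ← mul_div_mul_right M _ hI]
  exact div_le_div_of_nonneg_right h (mul_self_nonneg _)

theorem condDensity_antitoneOn (hg : Integrable g) (hg0 : ∀ y, 0 ≤ g y) (hlc : LogConcave g)
    (hM : ∀ y, (Ioo c d).indicator g y ≤ M) : AntitoneOn (condDensity g c d) (Ici 0) :=
  fun _ ha _ hb hab => div_le_div_of_nonneg_right
    (autocorr_antitoneOn (hg.indicator measurableSet_Ioo) (indicator_nonneg fun y _ => hg0 y) hM
      (hlc.indicator (convex_Ioo c d)) ha hb hab) (sq_nonneg _)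

theorem integrable_condDensity (hg : Integrable g) : Integrable (condDensity g c d) :=
  (integrable_autocorr (hg.indicator measurableSet_Ioo)).div_const _

theorem integral_Ioi_condDensity (hg : Integrable g) (hI : ∫ y in Ioo c d, g y ≠ 0) :
    ∫ v in Ioi 0, condDensity g c d v = 1 / 2 := by
  simp only [condDensity]
  rw [integral_div, integral_Ioi_autocorr (hg.indicator measurableSet_Ioo),
    integral_indicator measurableSet_Ioo]
  field_simp

theorem condDensity_mul_le (hg : Integrable g) (hg0 : ∀ y, 0 ≤ g y) (hlc : LogConcave g)
    {c₁ c₂ : ℝ} (hM : ∀ y, (Ioo c₁ d).indicator g y ≤ M) (hc : c₁ ≤ c₂) {v₁ v₂ : ℝ}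
    (hv₁ : 0 ≤ v₁) (hv : v₁ ≤ v₂) :
    condDensity g c₂ d v₂ * condDensity g c₁ d v₁ ≤
      condDensity g c₂ d v₁ * condDensity g c₁ d v₂ := by
  simp only [condDensity, div_mul_div_comm]
  exact div_le_div_of_nonneg_right (autocorr_indicator_Ioo_mul_le hg hg0 hlc hM hc hv₁ hv)
    (by positivity)

theorem intervalIntegral_mul_sq_eq_setIntegral_condDensity (w g : ℝ → ℝ) (hcd : c ≤ d) :
    ∫ v in (0 : ℝ)..(d - c),
        w v * ((∫ y in (c + v)..d, g (y - v) * g y) / (∫ y in Ioo c d, g y) ^ 2) ^ 2 =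
      ∫ v in Ioi 0, w v * condDensity g c d v ^ 2 := by
  rw [intervalIntegral.integral_of_le (by linarith),
    setIntegral_eq_of_subset_of_forall_sdiff_eq_zero measurableSet_Ioi Ioc_subset_Ioi_self
      fun v hv => by
        rw [condDensity, autocorr_indicator_Ioo_of_le
          (le_of_lt (not_le.1 fun h => hv.2 ⟨hv.1, h⟩)), zero_div, sq, mul_zero, mul_zero]]
  refine setIntegral_congr_fun measurableSet_Ioc fun v hv => ?_
  simp only [condDensity, intervalIntegral_eq_autocorr hv.1.le (by linarith [hv.2] : c + v ≤ d)]

theorem setIntegral_mul_condDensity_sq_le (hg : Integrable g) (hg0 : ∀ y, 0 ≤ g y)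
    (hlc : LogConcave g) {w : ℝ → ℝ} (hw0 : ∀ v, 0 ≤ v → 0 ≤ w v) (hw : AntitoneOn w (Ici 0))
    {c₁ c₂ : ℝ} (hM : ∀ y, (Ioo c₁ d).indicator g y ≤ M) (hc : c₁ ≤ c₂)
    (hI₁ : ∫ y in Ioo c₁ d, g y ≠ 0) (hI₂ : ∫ y in Ioo c₂ d, g y ≠ 0) :
    ∫ v in Ioi 0, w v * condDensity g c₁ d v ^ 2 ≤
      ∫ v in Ioi 0, w v * condDensity g c₂ d v ^ 2 := by
  have hM₂ : ∀ y, (Ioo c₂ d).indicator g y ≤ M := fun y =>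
    (indicator_le_indicator_of_subset (Ioo_subset_Ioo_left hc) hg0 y).trans (hM y)
  exact setIntegral_mul_sq_le_of_ratio_antitoneOn measurableSet_Ioi
    (C := max (w 0) (max (M / ∫ y in Ioo c₁ d, g y) (M / ∫ y in Ioo c₂ d, g y)))
    (fun v hv => hw0 v (le_of_lt hv)) (fun v _ => condDensity_nonneg hg0 v)
    (fun v _ => condDensity_nonneg hg0 v)
    (fun v hv => (hw self_mem_Ici (Ioi_subset_Ici_self hv) (le_of_lt hv)).trans (le_max_left _ _))
    (fun v _ => (condDensity_le hg hg0 hM hI₁ v).trans ((le_max_left _ _).trans (le_max_right _ _)))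
    (fun v _ => (condDensity_le hg hg0 hM₂ hI₂ v).trans
      ((le_max_right _ _).trans (le_max_right _ _)))
    (hw.mono Ioi_subset_Ici_self)
    ((condDensity_antitoneOn hg hg0 hlc hM).mono Ioi_subset_Ici_self)
    ((condDensity_antitoneOn hg hg0 hlc hM₂).mono Ioi_subset_Ici_self)
    (integrable_condDensity hg).integrableOn (integrable_condDensity hg).integrableOn
    (fun y _ z hz hzy => condDensity_mul_le hg hg0 hlc hM hc (le_of_lt hz) hzy)
    (by rw [integral_Ioi_condDensity hg hI₁, integral_Ioi_condDensity hg hI₂])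
    (by rw [integral_Ioi_condDensity hg hI₁]; norm_num)

end condDensity

end WeightedExtropy

open WeightedExtropy in
/-- For i.i.d. random variables with common log-concave density `g` and cdf `G`,
and a decreasing nonnegative weight `w`, the conditional general weighted extropy
`J^w(V|S) = -(1/2) ∫_0^{d-c} w(v) h(v;c,d)² dv` of `V = |Y₁ - Y₂|` given
`S = {c < Y₁, Y₂ < d}`, where
`h(v;c,d) = (∫_{c+v}^d g(y-v) g(y) dy)/(G d - G c)²`, is decreasing in `c`
for fixed `d`. -/
theorem weighted_extropy_decreasing_in_c
    (g G w : ℝ → ℝ)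
    (hg_nonneg : ∀ y, 0 ≤ g y)
    (hg_int : Integrable g)
    (hG : ∀ y, G y = ∫ t in Set.Iic y, g t)
    (hlc : ConcaveOn ℝ {y : ℝ | 0 < g y} (fun y => Real.log (g y)))
    (hw_nonneg : ∀ v, 0 ≤ v → 0 ≤ w v)
    (hw_dec : AntitoneOn w (Set.Ici 0))
    (c₁ c₂ d : ℝ) (hc : c₁ ≤ c₂) (hc₂d : c₂ < d)
    (hG₁ : G c₁ < G d) (hG₂ : G c₂ < G d) :
    -(1 / 2) * ∫ v in (0:ℝ)..(d - c₂),
        w v * ((∫ y in (c₂ + v)..d, g (y - v) * g y) / (G d - G c₂) ^ 2) ^ 2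
      ≤ -(1 / 2) * ∫ v in (0:ℝ)..(d - c₁),
        w v * ((∫ y in (c₁ + v)..d, g (y - v) * g y) / (G d - G c₁) ^ 2) ^ 2 := by
  have hc₁d : c₁ < d := hc.trans_lt hc₂d
  have hmass : ∀ c ≤ d, G d - G c = ∫ y in Ioo c d, g y := fun c hcd => by
    rw [hG, hG, intervalIntegral.integral_Iic_sub_Iic hg_int.integrableOn hg_int.integrableOn,
      intervalIntegral.integral_of_le hcd, integral_Ioc_eq_integral_Ioo]
  have hI₁ : 0 < ∫ y in Ioo c₁ d, g y := hmass c₁ hc₁d.le ▸ sub_pos.2 hG₁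
  have hI₂ : 0 < ∫ y in Ioo c₂ d, g y := hmass c₂ hc₂d.le ▸ sub_pos.2 hG₂
  obtain ⟨M, hM⟩ := LogConcave.bddAbove_image_Icc hlc hg_nonneg
    (nontrivial_pos_of_setIntegral_pos hI₁) c₁ d
  have hgM : ∀ y ∈ Icc c₁ d, g y ≤ M := fun y hy => hM ⟨y, hy, rfl⟩
  have hM₁ : ∀ y, (Ioo c₁ d).indicator g y ≤ M := fun y =>
    indicator_apply_le' (fun hy => hgM y (Ioo_subset_Icc_self hy))
      fun _ => (hg_nonneg d).trans (hgM d (right_mem_Icc.2 hc₁d.le))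
  rw [hmass c₁ hc₁d.le, hmass c₂ hc₂d.le,
    intervalIntegral_mul_sq_eq_setIntegral_condDensity w g hc₁d.le,
    intervalIntegral_mul_sq_eq_setIntegral_condDensity w g hc₂d.le]
  have key := setIntegral_mul_condDensity_sq_le hg_int hg_nonneg hlc hw_nonneg hw_dec hM₁ hc
    hI₁.ne' hI₂.ne'
  linarith
end
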